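/- arXiv:2409.12557 — 2 statements merged into one kernel-verified Lean document; each statement's English description precedes it below -/
import Mathlib

section
/- There exists a function ψ: ℕ → [0, 1/2) such that ∑_{q=1}^∞ ψ(q) = ∞ and yet the set W(ψ, ℕ) has Fourier dimension 0; that is, for every Borel probability measure μ on ℝ with μ(W(ψ, ℕ)) = 1 and every s > 0, there is no constant C > 0 such that |μ̂(ξ)| ≤ C(1 + |ξ|)^{−s/2} for all ξ ∈ ℝ. -/
open MeasureTheory

/-- Distance from a real number to the nearest integer. -/
noncomputable def nint (x : ℝ) : ℝ := |x - round x|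

/-- Fourier transform of a measure on `ℝ`: `μ̂(ξ) = ∫ e^{-2πiξx} dμ(x)`. -/
noncomputable def ft1 (μ : Measure ℝ) (ξ : ℝ) : ℂ :=
  ∫ x, Complex.exp (((-(2 * Real.pi * (ξ * x)) : ℝ) : ℂ) * Complex.I) ∂μ

/-- The `ψ`-well approximable set `W(ψ, Q)`. -/
def W (ψ : ℕ → ℝ) (Q : Set ℕ) : Set ℝ :=
  {x | x ∈ Set.Icc (0 : ℝ) 1 ∧ {q : ℕ | q ∈ Q ∧ nint (q * x) < ψ q}.Infinite}

/-!
Let `c n = 1 / (8 * 2 ^ n)` and pick `D n ≥ 2 ^ n` with `c n * ∑_{d ∣ D n} 1 / d ≥ n` (possible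
since the divisors of `K!` include `1, …, K`). Take for `ψ` the supremum over `n` of the blocks
`q ↦ c n / (D n / q)` on the divisors `q` of `D n`: the `n`-th block alone contributes at least `n`
to `∑ ψ`. Since `‖D x‖ ≤ (D / q) ‖q x‖`, every `x ∈ W(ψ, ℕ)` has `‖D n x‖ < c n` for infinitely
many `n`.

If `|μ̂(ξ)| ≤ C (1 + |ξ|)^(-s/2)`, integrate `|∑_{j < N} e(j D x)|² = ∑_{j,k} cos (2π (j - k) D x)`
with `N = 2 ^ n`: it is at least `N² / 4` where `‖D x‖ < c n`, and its integral is
`∑_{j,k} Re μ̂((j - k) D) ≤ N + N² C (1 + D)^(-s/2)`. By Markov's inequality the sets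
`{‖D n x‖ < c n}` have summable measures, so Borel–Cantelli gives `μ(W(ψ, ℕ)) = 0`.
-/

open Filter Real
open scoped Nat

lemma nint_nonneg (x : ℝ) : 0 ≤ nint x := abs_nonneg _

lemma nint_natCast_mul_le (m : ℕ) (y : ℝ) : nint (m * y) ≤ m * nint y := by
  calc nint (m * y) ≤ |m * y - ((m * round y : ℤ) : ℝ)| := round_le _ _
    _ = m * nint y := by
      simp only [nint, Int.cast_mul, Int.cast_natCast, ← mul_sub, abs_mul, Nat.abs_cast]

lemma ft1_eq_charFun (μ : Measure ℝ) (ξ : ℝ) : ft1 μ ξ = charFun μ (-(2 * π * ξ)) := by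
  simp only [ft1, charFun_apply_real]
  congr 1 with x
  push_cast
  ring_nf

lemma norm_ft1_le_one (μ : Measure ℝ) [IsProbabilityMeasure μ] (ξ : ℝ) : ‖ft1 μ ξ‖ ≤ 1 := by
  rw [ft1_eq_charFun]
  exact norm_charFun_le_one _

lemma ft1_re_eq_integral_cos (μ : Measure ℝ) [IsFiniteMeasure μ] (ξ : ℝ) :
    (ft1 μ ξ).re = ∫ x, cos (2 * π * ξ * x) ∂μ := by
  have hint :
      Integrable (fun x : ℝ => Complex.exp (((-(2 * π * (ξ * x)) : ℝ) : ℂ) * Complex.I)) μ :=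
    .of_bound (by fun_prop) 1 (.of_forall fun x => (Complex.norm_exp_ofReal_mul_I _).le)
  rw [ft1, ← RCLike.re_to_complex, ← integral_re hint]
  congr 1 with x
  rw [RCLike.re_to_complex, Complex.exp_ofReal_mul_I_re, cos_neg]
  ring_nf

lemma integrable_cos_comp {α : Type*} [MeasurableSpace α] {μ : Measure α} [IsFiniteMeasure μ]
    {f : α → ℝ} (hf : Measurable f) :
    Integrable (fun x => cos (f x)) μ :=
  .of_bound (by fun_prop) 1 (.of_forall fun x => by simpa using abs_cos_le_one (f x))

lemma sum_sum_cos_sub {ι : Type*} (s : Finset ι) (a : ι → ℝ) :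
    ∑ j ∈ s, ∑ k ∈ s, cos (a j - a k) = (∑ j ∈ s, cos (a j)) ^ 2 + (∑ j ∈ s, sin (a j)) ^ 2 := by
  simp only [cos_sub, sq, Finset.sum_mul_sum, ← Finset.sum_add_distrib]

lemma half_le_sum_cos_of_nint_lt {N : ℕ} {D c x : ℝ} (hNc : 2 * π * N * c ≤ 1)
    (hx : nint (D * x) < c) : (N : ℝ) / 2 ≤ ∑ j ∈ Finset.range N, cos (2 * π * j * D * x) := by
  have hterm : ∀ j ∈ Finset.range N, 1 / 2 ≤ cos (2 * π * j * D * x) := by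
    intro j hj
    set u := D * x - round (D * x)
    have hjN : (j : ℝ) ≤ N := by exact_mod_cast (Finset.mem_range.1 hj).le
    have hsmall : |2 * π * j * u| ≤ 1 := by
      rw [abs_mul, abs_of_nonneg (by positivity)]
      calc 2 * π * j * |u| ≤ 2 * π * N * c := by gcongr; exact hx.le
        _ ≤ 1 := hNc
    have hperiod : cos (2 * π * j * D * x) = cos (2 * π * j * u) := by
      rw [← cos_sub_int_mul_two_pi _ (j * round (D * x))]
      push_cast [u]
      ring_nf
    rw [hperiod]
    nlinarith [one_sub_sq_div_two_le_cos (x := 2 * π * j * u), sq_abs (2 * π * j * u),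
      abs_nonneg (2 * π * j * u)]
  calc (N : ℝ) / 2 = ∑ _j ∈ Finset.range N, (1 / 2 : ℝ) := by simp [div_eq_mul_inv]
    _ ≤ _ := Finset.sum_le_sum hterm

lemma integral_sum_sum_cos_sub_le (μ : Measure ℝ) [IsProbabilityMeasure μ] (N : ℕ) {D B : ℝ}
    (hB : ∀ k : ℤ, k ≠ 0 → ‖ft1 μ (k * D)‖ ≤ B) :
    ∫ x, ∑ j ∈ Finset.range N, ∑ k ∈ Finset.range N, cos (2 * π * j * D * x - 2 * π * k * D * x) ∂μ
      ≤ N + N ^ 2 * B := by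
  have hB0 : 0 ≤ B := (norm_nonneg _).trans (hB 1 one_ne_zero)
  have hterm : ∀ j k : ℕ, ∫ x, cos (2 * π * j * D * x - 2 * π * k * D * x) ∂μ
      ≤ (if j = k then 1 else 0) + B := by
    intro j k
    have hre : ∫ x, cos (2 * π * j * D * x - 2 * π * k * D * x) ∂μ
        = (ft1 μ (((j - k : ℤ) : ℝ) * D)).re := by
      rw [ft1_re_eq_integral_cos]
      congr 1 with x
      push_cast
      ring_nf
    rw [hre]
    refine (Complex.re_le_norm _).trans ?_
    split_ifs with hjk
    · exact (norm_ft1_le_one μ _).trans (le_add_of_nonneg_right hB0)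
    · exact (hB _ (sub_ne_zero.2 (by exact_mod_cast hjk))).trans (le_add_of_nonneg_left le_rfl)
  rw [integral_finsetSum _ fun j _ =>
    integrable_finsetSum _ fun k _ => integrable_cos_comp (by fun_prop)]
  calc _ ≤ ∑ j ∈ Finset.range N, ∑ k ∈ Finset.range N, ((if j = k then 1 else 0) + B) := by
        gcongr with j _
        rw [integral_finsetSum _ fun k _ => integrable_cos_comp (by fun_prop)]
        gcongr with k _
        exact hterm j k
    _ = N + N ^ 2 * B := by
        simp +contextual [Finset.sum_add_distrib, Finset.sum_ite_eq]
        ring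

lemma measureReal_nint_lt_le (μ : Measure ℝ) [IsProbabilityMeasure μ] {N : ℕ} (hN : 0 < N)
    {D c B : ℝ} (hNc : 2 * π * N * c ≤ 1) (hB : ∀ k : ℤ, k ≠ 0 → ‖ft1 μ (k * D)‖ ≤ B) :
    μ.real {x | nint (D * x) < c} ≤ 4 / N + 4 * B := by
  set f : ℝ → ℝ := fun x =>
    ∑ j ∈ Finset.range N, ∑ k ∈ Finset.range N, cos (2 * π * j * D * x - 2 * π * k * D * x)
  have hf : ∀ x, f x = (∑ j ∈ Finset.range N, cos (2 * π * j * D * x)) ^ 2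
      + (∑ j ∈ Finset.range N, sin (2 * π * j * D * x)) ^ 2 :=
    fun x => sum_sum_cos_sub (Finset.range N) fun j => 2 * π * j * D * x
  have hsub : {x | nint (D * x) < c} ⊆ {x | (N : ℝ) ^ 2 / 4 ≤ f x} := by
    intro x hx
    have hcos := half_le_sum_cos_of_nint_lt hNc hx
    change _ ≤ f x
    rw [hf]
    nlinarith [sq_nonneg (∑ j ∈ Finset.range N, sin (2 * π * j * D * x))]
  have hfint : Integrable f μ :=
    integrable_finsetSum _ fun j _ => integrable_finsetSum _ fun k _ =>
      integrable_cos_comp (by fun_prop)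
  have hmarkov := mul_meas_ge_le_integral_of_nonneg (.of_forall fun x => by
    change 0 ≤ f x; rw [hf]; positivity) hfint ((N : ℝ) ^ 2 / 4)
  calc μ.real {x | nint (D * x) < c} ≤ μ.real {x | (N : ℝ) ^ 2 / 4 ≤ f x} := measureReal_mono hsub
    _ ≤ (N + N ^ 2 * B) / (N ^ 2 / 4) := by
      rw [le_div_iff₀ (by positivity)]
      linarith [integral_sum_sum_cos_sub_le μ N hB]
    _ = 4 / N + 4 * B := by
      field_simp

lemma nonneg_of_norm_ft1_le {μ : Measure ℝ} {C s : ℝ}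
    (hdecay : ∀ ξ : ℝ, ‖ft1 μ ξ‖ ≤ C * (1 + |ξ|) ^ (-s / 2)) : 0 ≤ C := by
  simpa using (norm_nonneg _).trans (hdecay 0)

lemma norm_ft1_intCast_mul_le {μ : Measure ℝ} {C s : ℝ} (hs : 0 ≤ s)
    (hdecay : ∀ ξ : ℝ, ‖ft1 μ ξ‖ ≤ C * (1 + |ξ|) ^ (-s / 2)) {D : ℝ} (hD : 0 ≤ D) {k : ℤ}
    (hk : k ≠ 0) : ‖ft1 μ (k * D)‖ ≤ C * (1 + D) ^ (-s / 2) := by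
  have hkD : D ≤ |k * D| := by
    rw [abs_mul, abs_of_nonneg hD]
    exact le_mul_of_one_le_left hD (by exact_mod_cast Int.one_le_abs hk)
  refine (hdecay _).trans (mul_le_mul_of_nonneg_left ?_ (nonneg_of_norm_ft1_le hdecay))
  exact rpow_le_rpow_of_nonpos (by positivity) (by linarith) (by linarith)

lemma measure_limsup_eq_zero_of_measureReal_le {α : Type*} [MeasurableSpace α] {μ : Measure α}
    [IsFiniteMeasure μ] {s : ℕ → Set α} {f : ℕ → ℝ} (hf : Summable f)
    (hs : ∀ n, μ.real (s n) ≤ f n) : μ (limsup s atTop) = 0 := by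
  refine measure_limsup_atTop_eq_zero
    (ne_top_of_le_ne_top (ENNReal.ofReal_ne_top (r := ∑' n, f n)) ?_)
  rw [ENNReal.ofReal_tsum_of_nonneg (fun n => measureReal_nonneg.trans (hs n)) hf]
  exact ENNReal.tsum_le_tsum fun n =>
    (ofReal_measureReal (μ := μ)).symm.le.trans (ENNReal.ofReal_le_ofReal (hs n))

noncomputable def blockPsi (D : ℕ) (c : ℝ) (q : ℕ) : ℝ :=
  if q ∣ D then c / (D / q : ℕ) else 0

lemma blockPsi_nonneg {D : ℕ} {c : ℝ} (hc : 0 ≤ c) (q : ℕ) : 0 ≤ blockPsi D c q := by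
  unfold blockPsi; split_ifs <;> positivity

lemma blockPsi_le {D : ℕ} {c : ℝ} (hc : 0 ≤ c) (q : ℕ) : blockPsi D c q ≤ c := by
  unfold blockPsi
  split_ifs
  · rcases Nat.eq_zero_or_pos (D / q) with h | h
    · simp [h, hc]
    · exact div_le_self hc (by exact_mod_cast h)
  · exact hc

lemma le_and_nint_lt_of_nint_lt_blockPsi {D q : ℕ} {c x : ℝ} (h : nint (q * x) < blockPsi D c q) :
    q ≤ D ∧ nint (D * x) < c := by
  unfold blockPsi at h
  split_ifs at h with hqD
  · obtain ⟨m, rfl⟩ := hqD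
    rcases Nat.eq_zero_or_pos (q * m) with h0 | hqm
    · simp [h0] at h
      exact absurd h (nint_nonneg _).not_gt
    · have hq : 0 < q := Nat.pos_of_mul_pos_right hqm
      have hm : (0 : ℝ) < m := by exact_mod_cast Nat.pos_of_mul_pos_left hqm
      rw [Nat.mul_div_cancel_left m hq] at h
      refine ⟨Nat.le_mul_of_pos_right q (Nat.pos_of_mul_pos_left hqm), ?_⟩
      calc nint ((q * m : ℕ) * x) = nint (m * (q * x)) := by push_cast; ring_nf
        _ ≤ m * nint (q * x) := nint_natCast_mul_le m _
        _ < m * (c / m) := by gcongr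
        _ = c := by field_simp
  · exact absurd h (nint_nonneg _).not_gt

lemma sum_divisors_blockPsi (D : ℕ) (c : ℝ) :
    ∑ q ∈ D.divisors, blockPsi D c q = c * ∑ d ∈ D.divisors, (d : ℝ)⁻¹ := by
  rw [Finset.mul_sum, ← Nat.sum_div_divisors D fun d => c * (d : ℝ)⁻¹]
  refine Finset.sum_congr rfl fun q hq => ?_
  rw [blockPsi, if_pos (Nat.dvd_of_mem_divisors hq), div_eq_mul_inv]

lemma W_iSup_blockPsi_subset_limsup (D : ℕ → ℕ) (c : ℕ → ℝ) :
    W (fun q => ⨆ n, blockPsi (D n) (c n) q) Set.univ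
      ⊆ limsup (fun n => {x : ℝ | nint (D n * x) < c n}) atTop := by
  rintro x ⟨-, hx⟩
  rw [mem_limsup_iff_frequently_mem, frequently_atTop]
  intro a
  obtain ⟨q, ⟨-, hq⟩, hqa⟩ := hx.exists_gt (∑ n ∈ Finset.range a, D n)
  obtain ⟨n, hn⟩ := exists_lt_of_lt_ciSup hq
  obtain ⟨hqD, hnint⟩ := le_and_nint_lt_of_nint_lt_blockPsi hn
  refine ⟨n, ?_, hnint⟩
  by_contra! hna
  have := Finset.single_le_sum (fun n _ => Nat.zero_le (D n)) (Finset.mem_range.2 hna)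
  omega

lemma exists_le_sum_inv_divisors (b : ℝ) (M : ℕ) :
    ∃ D, M ≤ D ∧ b ≤ ∑ d ∈ D.divisors, (d : ℝ)⁻¹ := by
  obtain ⟨K, hbK, hMK⟩ := ((tendsto_sum_range_one_div_nat_succ_atTop.eventually_ge_atTop b).and
    (eventually_ge_atTop M)).exists
  refine ⟨K !, hMK.trans K.self_le_factorial, hbK.trans ?_⟩
  calc ∑ i ∈ Finset.range K, (1 / (i + 1) : ℝ) = ∑ d ∈ Finset.Icc 1 K, (d : ℝ)⁻¹ := by
        have := congrArg (Rat.cast : ℚ → ℝ) (harmonic_eq_sum_Icc (n := K))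
        push_cast [harmonic] at this
        simpa using this
    _ ≤ ∑ d ∈ (K !).divisors, (d : ℝ)⁻¹ := by
        refine Finset.sum_le_sum_of_subset_of_nonneg (fun d hd => ?_) fun _ _ _ => by positivity
        obtain ⟨hd1, hdK⟩ := Finset.mem_Icc.1 hd
        exact Nat.mem_divisors.2 ⟨Nat.dvd_factorial hd1 hdK, K.factorial_ne_zero⟩

noncomputable def radius (n : ℕ) : ℝ := 1 / (8 * 2 ^ n)

noncomputable def scale (n : ℕ) : ℕ :=
  (exists_le_sum_inv_divisors (n / radius n) (2 ^ n)).choose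

noncomputable def psi (q : ℕ) : ℝ := ⨆ n, blockPsi (scale n) (radius n) q

lemma radius_pos (n : ℕ) : 0 < radius n := by unfold radius; positivity

lemma radius_le (n : ℕ) : radius n ≤ 1 / 8 := by
  unfold radius
  gcongr
  exact le_mul_of_one_le_right (by norm_num) (one_le_pow₀ one_le_two)

lemma two_pow_le_scale (n : ℕ) : 2 ^ n ≤ scale n :=
  (exists_le_sum_inv_divisors _ _).choose_spec.1

lemma le_radius_mul_sum_inv_divisors_scale (n : ℕ) :
    n ≤ radius n * ∑ d ∈ (scale n).divisors, (d : ℝ)⁻¹ :=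
  (div_le_iff₀' (radius_pos n)).1 (exists_le_sum_inv_divisors _ _).choose_spec.2

lemma blockPsi_le_psi (n q : ℕ) : blockPsi (scale n) (radius n) q ≤ psi q :=
  le_ciSup (f := fun n => blockPsi (scale n) (radius n) q)
    ⟨1 / 8, by rintro _ ⟨m, rfl⟩; exact (blockPsi_le (radius_pos m).le q).trans (radius_le m)⟩ n

lemma psi_nonneg (q : ℕ) : 0 ≤ psi q :=
  (blockPsi_nonneg (radius_pos 0).le q).trans (blockPsi_le_psi 0 q)

lemma psi_le (q : ℕ) : psi q ≤ 1 / 8 :=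
  ciSup_le fun n => (blockPsi_le (radius_pos n).le q).trans (radius_le n)

lemma tendsto_sum_range_psi :
    Tendsto (fun N => ∑ q ∈ Finset.range N, psi q) atTop atTop := by
  refine tendsto_atTop_atTop_of_monotone (fun a b hab => Finset.sum_le_sum_of_subset_of_nonneg
    (Finset.range_subset_range.2 hab) fun q _ _ => psi_nonneg q) fun b => ?_
  obtain ⟨n, hn⟩ := exists_nat_ge b
  refine ⟨scale n + 1, ?_⟩
  calc b ≤ n := hn
    _ ≤ radius n * ∑ d ∈ (scale n).divisors, (d : ℝ)⁻¹ := le_radius_mul_sum_inv_divisors_scale n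
    _ = ∑ q ∈ (scale n).divisors, blockPsi (scale n) (radius n) q :=
        (sum_divisors_blockPsi _ _).symm
    _ ≤ ∑ q ∈ (scale n).divisors, psi q := Finset.sum_le_sum fun q _ => blockPsi_le_psi n q
    _ ≤ ∑ q ∈ Finset.range (scale n + 1), psi q :=
        Finset.sum_le_sum_of_subset_of_nonneg
          (fun q hq => Finset.mem_range.2 (Nat.lt_succ_of_le (Nat.divisor_le hq)))
          fun q _ _ => psi_nonneg q

lemma measureReal_nint_scale_lt_le (μ : Measure ℝ) [IsProbabilityMeasure μ] {C s : ℝ}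
    (hs : 0 ≤ s) (hdecay : ∀ ξ : ℝ, ‖ft1 μ ξ‖ ≤ C * (1 + |ξ|) ^ (-s / 2)) (n : ℕ) :
    μ.real {x | nint (scale n * x) < radius n} ≤ 4 * (1 / 2) ^ n + 4 * C * (2 ^ (-s / 2)) ^ n := by
  have hNc : 2 * π * ((2 ^ n : ℕ) : ℝ) * radius n ≤ 1 := by
    unfold radius
    push_cast
    field_simp
    linarith [pi_le_four]
  have hscale : (2 : ℝ) ^ n ≤ 1 + scale n := by
    have : ((2 ^ n : ℕ) : ℝ) ≤ scale n := by exact_mod_cast two_pow_le_scale n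
    push_cast at this
    linarith
  have hpow : ((2 : ℝ) ^ (-s / 2)) ^ n = ((2 : ℝ) ^ n) ^ (-s / 2) := by
    rw [← rpow_natCast, ← rpow_mul zero_le_two, mul_comm, rpow_mul zero_le_two, rpow_natCast]
  refine (measureReal_nint_lt_le μ (N := 2 ^ n) (by positivity) hNc
    fun k hk => norm_ft1_intCast_mul_le hs hdecay (Nat.cast_nonneg _) hk).trans ?_
  rw [hpow, Nat.cast_pow, Nat.cast_ofNat, one_div_pow, ← div_eq_mul_one_div, mul_assoc]
  have hdecay_le := rpow_le_rpow_of_nonpos (by positivity) hscale (by linarith : -s / 2 ≤ 0)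
  have hC := nonneg_of_norm_ft1_le hdecay
  gcongr

/-- There is a function `ψ : ℕ → [0, 1/2)` whose series diverges, yet `W(ψ, ℕ)` has
Fourier dimension `0`: no probability measure giving full mass to `W(ψ, ℕ)` has any
power-like Fourier decay. -/
theorem exists_divergent_psi_fourierDim_W_zero :
    ∃ ψ : ℕ → ℝ, (∀ q, 0 ≤ ψ q ∧ ψ q < 1 / 2) ∧
      Filter.Tendsto (fun N => ∑ q ∈ Finset.range N, ψ q) Filter.atTop Filter.atTop ∧
      ∀ μ : Measure ℝ, IsProbabilityMeasure μ → μ (W ψ Set.univ) = 1 →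
        ∀ s : ℝ, 0 < s →
          ¬ ∃ C : ℝ, 0 < C ∧ ∀ ξ : ℝ,
            ‖ft1 μ ξ‖ ≤ C * (1 + |ξ|) ^ (-s / 2) := by
  refine ⟨psi, fun q => ⟨psi_nonneg q, (psi_le q).trans_lt (by norm_num)⟩,
    tendsto_sum_range_psi, ?_⟩
  rintro μ _ hW s hs ⟨C, -, hdecay⟩
  have hρ : (2 : ℝ) ^ (-s / 2) < 1 := rpow_lt_one_of_one_lt_of_neg one_lt_two (by linarith)
  have hsummable : Summable fun n : ℕ => 4 * (1 / 2 : ℝ) ^ n + 4 * C * (2 ^ (-s / 2)) ^ n :=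
    ((summable_geometric_of_lt_one (by norm_num) (by norm_num)).mul_left 4).add
      ((summable_geometric_of_lt_one (by positivity) hρ).mul_left (4 * C))
  have hnull : μ (W psi Set.univ) = 0 :=
    measure_mono_null (W_iSup_blockPsi_subset_limsup scale radius)
      (measure_limsup_eq_zero_of_measureReal_le hsummable
        (measureReal_nint_scale_lt_le μ hs.le hdecay))
  simp [hW] at hnull
end

section
/- Let 0 < s < 1. There is a constant C = C(s) > 0 such that for every q ∈ ℕ with q ≥ 1 and every real number 0 < ψ < 1/4, ∑_{j ∈ I} ∑_{k=1}^∞ q·2^{−j} · min{1/k, ψ·2^j/q} · (qk)^{−s} ≤ C · q^{−s} ψ^s, where I = {j ∈ ℕ : 2q ≤ 2^j ≤ q/ψ}. -/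
/-!
Write `x = 2 ^ j` and `a = ψ x / q ≤ 1`. The inner sum is
`q ^ (1 - s) x⁻¹ ∑ₖ min (1/k) a · k ^ (-s)`; splitting at `k ≈ 1/a`, the terms `k ≤ 1/a` contribute `a ∑ k ^ (-s) ≲ a · a ^ (s - 1)` and the
terms `k > 1/a` contribute `∑ k ^ (-1 - s) ≲ a ^ s`, so the inner sum is
`O(ψ ^ s q ^ (1 - 2s) x ^ (s - 1))`. As `s - 1 < 0` and `x ≥ 2q`, the sum over `j` is a geometric
series dominated by its first term `(2q) ^ (s - 1)`, which gives `q ^ (-s) ψ ^ s`.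
-/

open Finset Real

theorem mul_rpow_sub_one_le_rpow_sub_rpow {p x : ℝ} (hp0 : 0 ≤ p) (hp1 : p ≤ 1) (hx : 1 ≤ x) :
    p * x ^ (p - 1) ≤ x ^ p - (x - 1) ^ p := by
  have hx0 : 0 < x := by linarith
  have hinv : x⁻¹ ≤ 1 := inv_le_one_of_one_le₀ hx
  have hbern := rpow_one_add_le_one_add_mul_self (s := -x⁻¹) (by linarith) hp0 hp1
  have hsplit : (x - 1) ^ p = x ^ p * (1 + -x⁻¹) ^ p := by
    rw [← mul_rpow hx0.le (by linarith)]
    congr 1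
    field_simp
    ring
  have hxp : x ^ (p - 1) = x ^ p * x⁻¹ := by rw [rpow_sub_one hx0.ne', div_eq_mul_inv]
  rw [hsplit, hxp]
  nlinarith [rpow_pos_of_pos hx0 p]

theorem sum_range_rpow_neg_le {s : ℝ} (hs0 : 0 ≤ s) (hs1 : s < 1) (K : ℕ) :
    ∑ i ∈ range K, ((i + 1 : ℕ) : ℝ) ^ (-s) ≤ (K : ℝ) ^ (1 - s) / (1 - s) := by
  induction K with
  | zero => simp [zero_rpow (by linarith : 1 - s ≠ 0)]
  | succ K ih =>
    have hstep := mul_rpow_sub_one_le_rpow_sub_rpow (p := 1 - s) (x := ((K + 1 : ℕ) : ℝ))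
      (by linarith) (by linarith) (by simp)
    rw [show 1 - s - 1 = -s by ring, Nat.cast_add_one, add_sub_cancel_right] at hstep
    rw [sum_range_succ]
    rw [le_div_iff₀ (by linarith)] at ih ⊢
    push_cast at ih hstep ⊢
    linarith

theorem tsum_rpow_neg_one_sub_le {s : ℝ} (hs : 0 < s) {K : ℕ} (hK : K ≠ 0) :
    ∑' n : ℕ, ((n + K + 1 : ℕ) : ℝ) ^ (-1 - s) ≤ (K : ℝ) ^ (-s) / s := by
  have hK0 : (0 : ℝ) < K := by positivity
  have hanti : AntitoneOn (fun x : ℝ => x ^ (-1 - s)) (Set.Ici (K : ℝ)) := fun x hx y _ hxy =>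
    rpow_le_rpow_of_nonpos (hK0.trans_le hx) hxy (by linarith)
  refine (hanti.tsum_comp_add_le_integral K (integrableOn_Ioi_rpow_of_lt (by linarith) hK0)
    fun x hx => rpow_nonneg (hK0.trans hx).le _).trans_eq ?_
  rw [integral_Ioi_rpow_of_lt (by linarith) hK0]
  ring_nf

theorem tsum_min_inv_mul_rpow_neg_le {s a : ℝ} (hs0 : 0 < s) (hs1 : s < 1) (ha0 : 0 < a)
    (ha1 : a ≤ 1) :
    ∑' k : ℕ+, min (1 / ((k : ℕ) : ℝ)) a * ((k : ℕ) : ℝ) ^ (-s) ≤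
      (2 ^ (1 - s) / (1 - s) + 1 / s) * a ^ s := by
  set g : ℕ → ℝ := fun n => min (1 / (n : ℝ)) a * (n : ℝ) ^ (-s)
  have hg_nonneg (n : ℕ) : 0 ≤ g n := by positivity
  have hg_le_a (n : ℕ) : g n ≤ a * (n : ℝ) ^ (-s) :=
    mul_le_mul_of_nonneg_right (min_le_right _ _) (by positivity)
  have hg_le_rpow {n : ℕ} (hn : n ≠ 0) : g n ≤ (n : ℝ) ^ (-1 - s) := by
    calc g n ≤ 1 / (n : ℝ) * (n : ℝ) ^ (-s) :=
          mul_le_mul_of_nonneg_right (min_le_left _ _) (by positivity)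
      _ = (n : ℝ) ^ (-1 - s) := by
        rw [sub_eq_add_neg, rpow_add (by positivity), rpow_neg_one, one_div]
  have hsummable : Summable fun n => g (n + 1) := by
    refine .of_nonneg_of_le (fun n => hg_nonneg _) (fun n => hg_le_rpow n.succ_ne_zero) ?_
    exact (summable_nat_add_iff 1).mpr (summable_nat_rpow.mpr (by linarith))
  set K := ⌈1 / a⌉₊
  have hK : K ≠ 0 := by positivity
  have hKa : 1 / a ≤ K := Nat.le_ceil _
  have hK2a : (K : ℝ) ≤ 2 / a := by
    have := Nat.ceil_lt_add_one (one_div_pos.mpr ha0).le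
    have : 1 ≤ 1 / a := by rw [le_div_iff₀ ha0]; linarith
    linarith [show 2 / a = 1 / a + 1 / a by ring]
  have head : ∑ i ∈ range K, g (i + 1) ≤ 2 ^ (1 - s) / (1 - s) * a ^ s :=
    calc ∑ i ∈ range K, g (i + 1) ≤ a * ∑ i ∈ range K, ((i + 1 : ℕ) : ℝ) ^ (-s) := by
          rw [mul_sum]; exact sum_le_sum fun i _ => hg_le_a _
      _ ≤ a * ((2 / a) ^ (1 - s) / (1 - s)) := by
          grw [sum_range_rpow_neg_le hs0.le hs1]
          gcongr
      _ = 2 ^ (1 - s) / (1 - s) * a ^ s := by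
          rw [div_rpow zero_le_two ha0.le, rpow_sub ha0, rpow_one]
          field_simp
  have tail : ∑' i, g (i + K + 1) ≤ 1 / s * a ^ s :=
    calc ∑' i, g (i + K + 1) ≤ ∑' i : ℕ, ((i + K + 1 : ℕ) : ℝ) ^ (-1 - s) := by
          have h1 : Summable fun i => g (i + K + 1) :=
            (summable_nat_add_iff (f := fun n => g (n + 1)) K).mpr hsummable
          have h2 : Summable fun i : ℕ => ((i + K + 1 : ℕ) : ℝ) ^ (-1 - s) :=
            (summable_nat_add_iff (f := fun n : ℕ => (n : ℝ) ^ (-1 - s)) (K + 1)).mpr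
              (summable_nat_rpow.mpr (by linarith))
          exact h1.tsum_le_tsum (fun i => hg_le_rpow (by omega)) h2
      _ ≤ (K : ℝ) ^ (-s) / s := tsum_rpow_neg_one_sub_le hs0 hK
      _ ≤ (1 / a) ^ (-s) / s := div_le_div_of_nonneg_right
          (rpow_le_rpow_of_nonpos (by positivity) hKa (by linarith)) hs0.le
      _ = 1 / s * a ^ s := by
          rw [one_div a, inv_rpow ha0.le, rpow_neg ha0.le, inv_inv]; ring
  calc ∑' k : ℕ+, g k = ∑' n, g (n + 1) := tsum_pnat_eq_tsum_succ
    _ = ∑ i ∈ range K, g (i + 1) + ∑' i, g (i + K + 1) :=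
        (hsummable.sum_add_tsum_nat_add K).symm
    _ ≤ _ := by rw [add_mul]; exact add_le_add head tail

theorem tsum_subtype_le_of_le_geometric {p : ℕ → Prop} {f : {j // p j} → ℝ} {c r : ℝ} {n₀ : ℕ}
    (hc : 0 ≤ c) (hr0 : 0 ≤ r) (hr1 : r < 1) (hp : ∀ j, p j → n₀ ≤ j) (hf0 : ∀ j, 0 ≤ f j)
    (hf : ∀ j, f j ≤ c * r ^ (j : ℕ)) :
    ∑' j, f j ≤ c * r ^ n₀ / (1 - r) := by
  have hG : HasSum (fun m => c * r ^ n₀ * r ^ m) (c * r ^ n₀ * (1 - r)⁻¹) :=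
    (hasSum_geometric_of_lt_one hr0 hr1).mul_left _
  have he : Function.Injective fun j : {j // p j} => (j : ℕ) - n₀ := by
    intro i j hij
    have := hp i i.2
    have := hp j j.2
    exact Subtype.ext (by simp only at hij; omega)
  have hfG (j : {j // p j}) : f j ≤ c * r ^ n₀ * r ^ ((j : ℕ) - n₀) := by
    rw [mul_assoc, ← pow_add, Nat.add_sub_cancel' (hp j j.2)]
    exact hf j
  have hfs : Summable f := .of_nonneg_of_le hf0 hfG (hG.summable.comp_injective he)
  rw [div_eq_mul_inv, ← hG.tsum_eq]
  exact hfs.tsum_le_tsum_of_inj _ he (fun _ _ => by positivity) hfG hG.summable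

theorem tsum_subtype_le_of_le_two_rpow {p : ℕ → Prop} {f : {j // p j} → ℝ} {c t X : ℝ}
    (hc : 0 ≤ c) (ht : t < 0) (hX : 0 < X) (hp : ∀ j, p j → X ≤ 2 ^ (j : ℝ))
    (hf0 : ∀ j, 0 ≤ f j) (hf : ∀ j, f j ≤ c * (2 ^ ((j : ℕ) : ℝ)) ^ t) :
    ∑' j, f j ≤ c * X ^ t / (1 - 2 ^ t) := by
  have hex : ∃ n : ℕ, X ≤ 2 ^ (n : ℝ) := by
    obtain ⟨n, hn⟩ := pow_unbounded_of_one_lt X one_lt_two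
    exact ⟨n, by rw [rpow_natCast]; exact hn.le⟩
  classical
  have hpow (n : ℕ) : ((2 : ℝ) ^ (n : ℝ)) ^ t = (2 ^ t) ^ n := by
    rw [← rpow_mul zero_le_two, mul_comm, rpow_mul zero_le_two, rpow_natCast]
  have hr1 : (2 : ℝ) ^ t < 1 := rpow_lt_one_of_one_lt_of_neg one_lt_two ht
  calc ∑' j, f j ≤ c * (2 ^ t) ^ Nat.find hex / (1 - 2 ^ t) :=
        tsum_subtype_le_of_le_geometric hc (by positivity) hr1
          (fun j hj => Nat.find_min' hex (hp j hj)) hf0 fun j => (hf j).trans_eq (by rw [hpow])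
    _ ≤ c * X ^ t / (1 - 2 ^ t) := by
        have : 0 < 1 - (2 : ℝ) ^ t := by linarith
        rw [← hpow]
        gcongr c * ?_ / _
        exact rpow_le_rpow_of_nonpos hX (Nat.find_spec hex) ht.le

theorem tsum_mul_min_mul_rpow_le {s q ψ x : ℝ} (hs0 : 0 < s) (hs1 : s < 1) (hq : 0 < q)
    (hψ : 0 < ψ) (hx : 0 < x) (hψx : ψ * x ≤ q) :
    ∑' k : ℕ+, q * x⁻¹ * min (1 / ((k : ℕ) : ℝ)) (ψ * x / q) * (q * ((k : ℕ) : ℝ)) ^ (-s) ≤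
      (2 ^ (1 - s) / (1 - s) + 1 / s) * ψ ^ s * q ^ (1 - 2 * s) * x ^ (s - 1) := by
  have ha1 : ψ * x / q ≤ 1 := (div_le_one hq).mpr hψx
  calc _ = q * x⁻¹ * q ^ (-s) *
        ∑' k : ℕ+, min (1 / ((k : ℕ) : ℝ)) (ψ * x / q) * ((k : ℕ) : ℝ) ^ (-s) := by
        rw [← tsum_mul_left]
        congr 1 with k
        rw [mul_rpow hq.le (Nat.cast_nonneg _)]
        ring
    _ ≤ q * x⁻¹ * q ^ (-s) * ((2 ^ (1 - s) / (1 - s) + 1 / s) * (ψ * x / q) ^ s) := by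
        gcongr
        exact tsum_min_inv_mul_rpow_neg_le hs0 hs1 (by positivity) ha1
    _ = _ := by
        rw [div_rpow (by positivity) hq.le, mul_rpow hψ.le hx.le, rpow_sub_one hx.ne',
          show 1 - 2 * s = 1 + -s + -s by ring, rpow_add hq, rpow_add hq, rpow_one, rpow_neg hq.le]
        field_simp

/-- Case 2 estimate: for `0 < s < 1` there is `C = C(s)` with
`∑_{j∈I} ∑_{k≥1} q2^{-j} · min{1/k, ψ2^j/q} · (qk)^{-s} ≤ C q^{-s} ψ^s`,
where `I = {j ∈ ℕ : 2q ≤ 2^j ≤ q/ψ}`. -/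
theorem case2_sum_le (s : ℝ) (hs0 : 0 < s) (hs1 : s < 1) :
    ∃ C : ℝ, 0 < C ∧
      ∀ q : ℕ, 1 ≤ q → ∀ ψ : ℝ, 0 < ψ → ψ < 1 / 4 →
        (∑' j : {j : ℕ // 2 * (q : ℝ) ≤ (2 : ℝ) ^ (j : ℝ) ∧ (2 : ℝ) ^ (j : ℝ) ≤ q / ψ},
          ∑' k : ℕ+,
            (q : ℝ) * (2 : ℝ) ^ (-((j : ℕ) : ℝ)) *
              min (1 / ((k : ℕ) : ℝ)) (ψ * (2 : ℝ) ^ (((j : ℕ)) : ℝ) / q) *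
                ((q : ℝ) * ((k : ℕ) : ℝ)) ^ (-s)) ≤
          C * (q : ℝ) ^ (-s) * ψ ^ s := by
  set C₀ : ℝ := 2 ^ (1 - s) / (1 - s) + 1 / s
  have hr1 : (2 : ℝ) ^ (s - 1) < 1 := rpow_lt_one_of_one_lt_of_neg one_lt_two (by linarith)
  have hC₀ : 0 < C₀ := by
    have : 0 < 1 - s := by linarith
    positivity
  refine ⟨C₀ * 2 ^ (s - 1) / (1 - 2 ^ (s - 1)), div_pos (by positivity) (by linarith), ?_⟩
  intro q hq ψ hψ _
  have hq0 : (0 : ℝ) < q := by exact_mod_cast hq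
  calc _ ≤ C₀ * ψ ^ s * q ^ (1 - 2 * s) * (2 * q) ^ (s - 1) / (1 - 2 ^ (s - 1)) := by
        refine tsum_subtype_le_of_le_two_rpow (by positivity) (by linarith) (by positivity)
          (fun j hj => hj.1) (fun j => tsum_nonneg fun k => by positivity) fun j => ?_
        rw [rpow_neg zero_le_two]
        exact tsum_mul_min_mul_rpow_le hs0 hs1 hq0 hψ (by positivity)
          ((le_div_iff₀' hψ).mp j.2.2)
    _ = _ := by
        have hq_pow : (q : ℝ) ^ (1 - 2 * s) * (q : ℝ) ^ (s - 1) = (q : ℝ) ^ (-s) := by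
          rw [← rpow_add hq0]; ring_nf
        rw [mul_rpow zero_le_two hq0.le, ← hq_pow]
        ring
end
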